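/- Information-theoretic direct product theorem for maximization (appendix Theorem, abstract form). Let Ω be a finite probability space, r ≥ 1 and b natural numbers, 𝒳₁,…,𝒳ᵣ finite types, and X_i : Ω → 𝒳_i random variables that are mutually independent. Let B : Ω → Fin (2^b) be any random variable, and for 1 ≤ i ≤ r set W_i = (X₁,…,X_{i−1}, B). Let score_i : Ω → ℝ be nonnegative random variables. Suppose f : [0,∞) → ℝ is concave and nondecreasing and that for every i and every value w of W_i occurring with positive probability, E[score_i | W_i = w] ≤ f( D_KL( law of X_i conditioned on W_i = w ‖ law of X_i ) ). Then E[Σ_{i=1}^r score_i] ≤ r · f(b/r). -/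

import Mathlib

/-!
Conditioning on `W_i = w` and using concavity of `f`, the expected `i`-th score is at most
`f (I(X_i; W_i))`: the average over `w` of the divergences in the hypothesis is the mutual
information. Since `W_{i+1}` is a function of `(X_i, W_i)`,
`I(X_i; W_i) ≤ H(X_i) + H(W_i) - H(W_{i+1})`, and the sum over `i` telescopes to
`∑ H(X_i) + H(B) - H(X_1, …, X_r, B) ≤ H(B) ≤ b`, the independence of the `X_i` giving
`H(X_1, …, X_r) = ∑ H(X_i)`. A second use of concavity and monotonicity of `f` yields
`∑ f (I(X_i; W_i)) ≤ r f (b / r)`.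
-/

open Classical

/-- Probability of an event under a finite probability mass function. -/
noncomputable def prOf {Ω : Type*} [Fintype Ω] (P : Ω → ℝ) (s : Ω → Prop) : ℝ :=
  ∑ ω, if s ω then P ω else 0

/-- Kullback–Leibler divergence in bits between two distributions on a finite type. -/
noncomputable def klBits {α : Type*} [Fintype α] (μ ν : α → ℝ) : ℝ :=
  ∑ x, μ x * Real.logb 2 (μ x / ν x)

namespace FiniteProb

variable {Ω α β : Type*} [Fintype Ω] {P : Ω → ℝ}

noncomputable def law (P : Ω → ℝ) (Y : Ω → α) (y : α) : ℝ :=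
  prOf P (fun ω => Y ω = y)

noncomputable def entropy (P : Ω → ℝ) [Fintype α] (Y : Ω → α) : ℝ :=
  -∑ y, law P Y y * Real.logb 2 (law P Y y)

noncomputable def condLaw (P : Ω → ℝ) (Y : Ω → α) (Z : Ω → β) (z : β) (y : α) : ℝ :=
  prOf P (fun ω => Y ω = y ∧ Z ω = z) / law P Z z

noncomputable def mutualInfo (P : Ω → ℝ) [Fintype α] [Fintype β] (Y : Ω → α) (Z : Ω → β) : ℝ :=
  entropy P Y + entropy P Z - entropy P (fun ω => (Y ω, Z ω))

lemma prOf_congr {s t : Ω → Prop} (h : ∀ ω, s ω ↔ t ω) : prOf P s = prOf P t := by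
  obtain rfl : s = t := funext fun ω => propext (h ω)
  rfl

lemma prOf_nonneg (hP0 : ∀ ω, 0 ≤ P ω) (s : Ω → Prop) : 0 ≤ prOf P s :=
  Finset.sum_nonneg fun ω _ => by split_ifs <;> simp [hP0 ω]

lemma prOf_mono (hP0 : ∀ ω, 0 ≤ P ω) {s t : Ω → Prop} (h : ∀ ω, s ω → t ω) :
    prOf P s ≤ prOf P t :=
  Finset.sum_le_sum fun ω _ => by
    by_cases hs : s ω
    · simp [hs, h ω hs]
    · by_cases ht : t ω <;> simp [hs, ht, hP0 ω]

lemma law_nonneg (hP0 : ∀ ω, 0 ≤ P ω) (Y : Ω → α) (y : α) : 0 ≤ law P Y y :=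
  prOf_nonneg hP0 _

lemma le_law_self (hP0 : ∀ ω, 0 ≤ P ω) (Y : Ω → α) (ω : Ω) : P ω ≤ law P Y (Y ω) := by
  have := Finset.single_le_sum (f := fun ω' => if Y ω' = Y ω then P ω' else 0)
    (fun ω' _ => by split_ifs <;> simp [hP0 ω']) (Finset.mem_univ ω)
  simpa [law, prOf] using this

lemma law_pos_of_pos (hP0 : ∀ ω, 0 ≤ P ω) (Y : Ω → α) {ω : Ω} (hω : 0 < P ω) :
    0 < law P Y (Y ω) :=
  hω.trans_le (le_law_self hP0 Y ω)

lemma sum_law_mul [Fintype α] (Y : Ω → α) (h : α → ℝ) :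
    ∑ y, law P Y y * h y = ∑ ω, P ω * h (Y ω) := by
  simp only [law, prOf, Finset.sum_mul]
  rw [Finset.sum_comm]
  refine Finset.sum_congr rfl fun ω _ => ?_
  simp

lemma sum_law [Fintype α] (Y : Ω → α) : ∑ y, law P Y y = ∑ ω, P ω := by
  simpa using sum_law_mul (P := P) Y fun _ => 1

lemma sum_prOf_and_eq [Fintype α] (Y : Ω → α) (Z : Ω → β) (z : β) :
    ∑ y, prOf P (fun ω => Y ω = y ∧ Z ω = z) = law P Z z := by
  simp only [law, prOf]
  rw [Finset.sum_comm]
  refine Finset.sum_congr rfl fun ω _ => ?_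
  by_cases hz : Z ω = z <;> simp [hz]

lemma sum_mul_congr_of_pos (hP0 : ∀ ω, 0 ≤ P ω) {g h : Ω → ℝ}
    (hgh : ∀ ω, 0 < P ω → g ω = h ω) : ∑ ω, P ω * g ω = ∑ ω, P ω * h ω :=
  Finset.sum_congr rfl fun ω _ => by
    rcases (hP0 ω).eq_or_lt with h0 | hpos
    · simp [← h0]
    · rw [hgh ω hpos]

lemma sum_mul_le_of_pos (hP0 : ∀ ω, 0 ≤ P ω) {g h : Ω → ℝ}
    (hgh : ∀ ω, 0 < P ω → g ω ≤ h ω) : ∑ ω, P ω * g ω ≤ ∑ ω, P ω * h ω :=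
  Finset.sum_le_sum fun ω _ => by
    rcases (hP0 ω).eq_or_lt with h0 | hpos
    · simp [← h0]
    · exact mul_le_mul_of_nonneg_left (hgh ω hpos) hpos.le

lemma klBits_nonneg [Fintype α] {μ ν : α → ℝ} (hμ : ∀ x, 0 ≤ μ x) (hν : ∀ x, 0 ≤ ν x)
    (hsum : ∑ x, ν x ≤ ∑ x, μ x) (hac : ∀ x, ν x = 0 → μ x = 0) : 0 ≤ klBits μ ν := by
  have hlog2 : 0 < Real.log 2 := Real.log_pos one_lt_two
  have hterm : ∀ x, (μ x - ν x) / Real.log 2 ≤ μ x * Real.logb 2 (μ x / ν x) := by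
    intro x
    rcases (hμ x).eq_or_lt with h0 | hpos
    · rw [← h0, zero_mul, zero_sub, neg_div]
      exact neg_nonpos.mpr (div_nonneg (hν x) hlog2.le)
    · have hνpos : 0 < ν x := (hν x).lt_of_ne fun h => hpos.ne' (hac x h.symm)
      calc (μ x - ν x) / Real.log 2 = μ x * (1 - (μ x / ν x)⁻¹) / Real.log 2 := by
            field_simp
        _ ≤ μ x * Real.log (μ x / ν x) / Real.log 2 := by
            gcongr
            exact Real.one_sub_inv_le_log_of_pos (div_pos hpos hνpos)
        _ = μ x * Real.logb 2 (μ x / ν x) := by rw [Real.logb, mul_div_assoc]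
  calc 0 ≤ (∑ x, μ x - ∑ x, ν x) / Real.log 2 := div_nonneg (by linarith) hlog2.le
    _ = ∑ x, (μ x - ν x) / Real.log 2 := by rw [← Finset.sum_sub_distrib, Finset.sum_div]
    _ ≤ klBits μ ν := Finset.sum_le_sum fun x _ => hterm x

lemma entropy_eq_neg_sum_mul_logb_law [Fintype α] (Y : Ω → α) :
    entropy P Y = -∑ ω, P ω * Real.logb 2 (law P Y (Y ω)) := by
  rw [entropy, sum_law_mul Y fun y => Real.logb 2 (law P Y y)]


lemma entropy_le_of_comp_eq (hP0 : ∀ ω, 0 ≤ P ω) [Fintype α] [Fintype β] {Y : Ω → α}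
    {Z : Ω → β} (g : α → β) (hg : ∀ ω, g (Y ω) = Z ω) : entropy P Z ≤ entropy P Y := by
  rw [entropy_eq_neg_sum_mul_logb_law, entropy_eq_neg_sum_mul_logb_law, neg_le_neg_iff]
  refine sum_mul_le_of_pos hP0 fun ω hω => Real.logb_le_logb_of_le one_lt_two
    (law_pos_of_pos hP0 Y hω) (prOf_mono hP0 fun ω' h => ?_)
  rw [← hg, ← hg, h]

lemma entropy_pi_eq_sum (hP0 : ∀ ω, 0 ≤ P ω) {ι : Type*} [Fintype ι] [DecidableEq ι]
    {κ : ι → Type*} [∀ i, Fintype (κ i)] (Y : ∀ i, Ω → κ i)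
    (hindep : ∀ x, law P (fun ω i => Y i ω) x = ∏ i, law P (Y i) (x i)) :
    entropy P (fun ω i => Y i ω) = ∑ i, entropy P (Y i) := by
  simp only [entropy_eq_neg_sum_mul_logb_law, hindep, Finset.sum_neg_distrib]
  rw [Finset.sum_comm, neg_inj]
  simp only [← Finset.mul_sum]
  refine sum_mul_congr_of_pos hP0 fun ω hω => Real.logb_prod _ _ fun i _ => ?_
  exact (law_pos_of_pos hP0 (Y i) hω).ne'

lemma entropy_le_logb_card (hP0 : ∀ ω, 0 ≤ P ω) (hP1 : ∑ ω, P ω = 1) [Fintype α] [Nonempty α]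
    (Y : Ω → α) : entropy P Y ≤ Real.logb 2 (Fintype.card α) := by
  set n : ℝ := (Fintype.card α : ℝ)
  have hn : 0 < n := Nat.cast_pos.mpr Fintype.card_pos
  have hgibbs : 0 ≤ klBits (law P Y) fun _ => n⁻¹ :=
    klBits_nonneg (law_nonneg hP0 Y) (fun _ => by positivity)
      (by simp [sum_law, hP1, n, hn.ne']) fun _ h => absurd h (by positivity)
  have hkl : klBits (law P Y) (fun _ => n⁻¹) = Real.logb 2 n - entropy P Y := by
    rw [klBits, sum_law_mul Y fun y => Real.logb 2 (law P Y y / n⁻¹),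
      entropy_eq_neg_sum_mul_logb_law, sub_neg_eq_add]
    calc ∑ ω, P ω * Real.logb 2 (law P Y (Y ω) / n⁻¹)
        = ∑ ω, P ω * (Real.logb 2 n + Real.logb 2 (law P Y (Y ω))) :=
          sum_mul_congr_of_pos hP0 fun ω hω => by
            rw [div_inv_eq_mul, Real.logb_mul (law_pos_of_pos hP0 Y hω).ne' hn.ne', add_comm]
      _ = Real.logb 2 n + ∑ ω, P ω * Real.logb 2 (law P Y (Y ω)) := by
          simp only [mul_add, Finset.sum_add_distrib, ← Finset.sum_mul, hP1, one_mul]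
  linarith

lemma law_pair [Fintype α] [Fintype β] (Y : Ω → α) (Z : Ω → β) (y : α) (z : β) :
    law P (fun ω => (Y ω, Z ω)) (y, z) = prOf P (fun ω => Y ω = y ∧ Z ω = z) :=
  prOf_congr fun _ => Prod.ext_iff

lemma law_mul_klBits_condLaw (hP0 : ∀ ω, 0 ≤ P ω) [Fintype α] [Fintype β] (Y : Ω → α)
    (Z : Ω → β) (z : β) :
    law P Z z * klBits (condLaw P Y Z z) (law P Y) = ∑ y, law P (fun ω => (Y ω, Z ω)) (y, z) *
      Real.logb 2 (law P (fun ω => (Y ω, Z ω)) (y, z) / (law P Y y * law P Z z)) := by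
  rw [klBits, Finset.mul_sum]
  refine Finset.sum_congr rfl fun y _ => ?_
  rw [law_pair, condLaw]
  rcases (law_nonneg hP0 Z z).eq_or_lt with h0 | hpos
  · have hjoint : prOf P (fun ω => Y ω = y ∧ Z ω = z) = 0 :=
      le_antisymm (h0 ▸ prOf_mono hP0 fun ω h => h.2) (prOf_nonneg hP0 _)
    simp [hjoint, ← h0]
  · rw [div_div, mul_comm (law P Z z) (law P Y y), ← mul_assoc, mul_div_cancel₀ _ hpos.ne']

lemma sum_law_mul_klBits_condLaw (hP0 : ∀ ω, 0 ≤ P ω) [Fintype α] [Fintype β] (Y : Ω → α)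
    (Z : Ω → β) : ∑ z, law P Z z * klBits (condLaw P Y Z z) (law P Y) = mutualInfo P Y Z := by
  set YZ := fun ω => (Y ω, Z ω)
  calc ∑ z, law P Z z * klBits (condLaw P Y Z z) (law P Y)
      = ∑ q : α × β, law P YZ q * Real.logb 2 (law P YZ q / (law P Y q.1 * law P Z q.2)) := by
        rw [Fintype.sum_prod_type_right]
        exact Finset.sum_congr rfl fun z _ => law_mul_klBits_condLaw hP0 Y Z z
    _ = ∑ ω, P ω * Real.logb 2 (law P YZ (YZ ω) / (law P Y (Y ω) * law P Z (Z ω))) :=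
        sum_law_mul YZ _
    _ = ∑ ω, P ω * (Real.logb 2 (law P YZ (YZ ω)) - Real.logb 2 (law P Y (Y ω))
          - Real.logb 2 (law P Z (Z ω))) := sum_mul_congr_of_pos hP0 fun ω hω => by
        rw [Real.logb_div (law_pos_of_pos hP0 YZ hω).ne'
            (mul_pos (law_pos_of_pos hP0 Y hω) (law_pos_of_pos hP0 Z hω)).ne',
          Real.logb_mul (law_pos_of_pos hP0 Y hω).ne' (law_pos_of_pos hP0 Z hω).ne']
        ring
    _ = mutualInfo P Y Z := by
        simp only [YZ, mutualInfo, entropy_eq_neg_sum_mul_logb_law, mul_sub,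
          Finset.sum_sub_distrib]
        ring

lemma klBits_condLaw_nonneg (hP0 : ∀ ω, 0 ≤ P ω) (hP1 : ∑ ω, P ω = 1) [Fintype α]
    (Y : Ω → α) (Z : Ω → β) (z : β) : 0 ≤ klBits (condLaw P Y Z z) (law P Y) := by
  rcases (law_nonneg hP0 Z z).eq_or_lt with h0 | hpos
  · simp [klBits, condLaw, ← h0]
  · refine klBits_nonneg (fun y => div_nonneg (prOf_nonneg hP0 _) hpos.le) (law_nonneg hP0 Y)
      ?_ fun y hy => ?_
    · simp only [condLaw]
      rw [← Finset.sum_div, sum_prOf_and_eq, div_self hpos.ne', sum_law, hP1]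
    · have hjoint : prOf P (fun ω => Y ω = y ∧ Z ω = z) = 0 :=
        le_antisymm (hy ▸ prOf_mono hP0 fun ω h => h.1) (prOf_nonneg hP0 _)
      rw [condLaw, hjoint, zero_div]

lemma mutualInfo_nonneg (hP0 : ∀ ω, 0 ≤ P ω) (hP1 : ∑ ω, P ω = 1) [Fintype α] [Fintype β]
    (Y : Ω → α) (Z : Ω → β) : 0 ≤ mutualInfo P Y Z := by
  rw [← sum_law_mul_klBits_condLaw hP0]
  exact Finset.sum_nonneg fun z _ =>
    mul_nonneg (law_nonneg hP0 Z z) (klBits_condLaw_nonneg hP0 hP1 Y Z z)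


lemma sum_mul_le_sum_law_mul (hP0 : ∀ ω, 0 ≤ P ω) [Fintype β] [DecidableEq β] (Z : Ω → β)
    (s : Ω → ℝ) (g : β → ℝ)
    (h : ∀ z, 0 < law P Z z → (∑ ω, (if Z ω = z then P ω else 0) * s ω) / law P Z z ≤ g z) :
    ∑ ω, P ω * s ω ≤ ∑ z, law P Z z * g z := by
  have hfiber : ∑ ω, P ω * s ω = ∑ z, ∑ ω, (if Z ω = z then P ω else 0) * s ω := by
    rw [Finset.sum_comm]
    simp [ite_mul]
  rw [hfiber]
  refine Finset.sum_le_sum fun z _ => ?_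
  rcases (law_nonneg hP0 Z z).eq_or_lt with h0 | hpos
  · have hnull : ∀ ω, Z ω = z → P ω = 0 := fun ω hω =>
      le_antisymm ((le_law_self hP0 Z ω).trans_eq (by rw [hω, ← h0])) (hP0 ω)
    rw [← h0, zero_mul]
    exact (Finset.sum_eq_zero fun ω _ => by split_ifs with hω <;> simp [hnull ω, hω]).le
  · exact (div_le_iff₀' hpos).mp (h z hpos)

theorem sum_mul_le_map_mutualInfo (hP0 : ∀ ω, 0 ≤ P ω) (hP1 : ∑ ω, P ω = 1) [Fintype α]
    [Fintype β] [DecidableEq β] {f : ℝ → ℝ} (hf : ConcaveOn ℝ (Set.Ici 0) f) (Y : Ω → α)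
    (Z : Ω → β) (s : Ω → ℝ)
    (hs : ∀ z, 0 < law P Z z → (∑ ω, (if Z ω = z then P ω else 0) * s ω) / law P Z z ≤
      f (klBits (condLaw P Y Z z) (law P Y))) :
    ∑ ω, P ω * s ω ≤ f (mutualInfo P Y Z) := by
  rw [← sum_law_mul_klBits_condLaw hP0]
  calc ∑ ω, P ω * s ω ≤ ∑ z, law P Z z * f (klBits (condLaw P Y Z z) (law P Y)) :=
        sum_mul_le_sum_law_mul hP0 Z s _ hs
    _ ≤ _ := by
        simpa only [smul_eq_mul] using hf.le_map_sum (fun z _ => law_nonneg hP0 Z z)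
          (by rw [sum_law, hP1]) fun z _ => klBits_condLaw_nonneg hP0 hP1 Y Z z

section Prefix

variable {r : ℕ} {𝒳 : Fin r → Type*}

-- For `i : Fin r` this is the `W_{i+1}` of the paper, whose indices start at `1`.
def prefixVar (X : ∀ i, Ω → 𝒳 i) (B : Ω → β) (k : ℕ) (ω : Ω) :
    (∀ j : {j : Fin r // (j : ℕ) < k}, 𝒳 j.1) × β :=
  (fun j => X j.1 ω, B ω)

lemma entropy_prefixVar_succ_le (hP0 : ∀ ω, 0 ≤ P ω) [∀ i, Fintype (𝒳 i)] [Fintype β]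
    (X : ∀ i, Ω → 𝒳 i) (B : Ω → β) (i : Fin r) :
    entropy P (prefixVar X B (i + 1)) ≤ entropy P (fun ω => (X i ω, prefixVar X B i ω)) := by
  refine entropy_le_of_comp_eq hP0
    (fun q => (fun j => if h : j.1 = i then cast (congrArg 𝒳 h.symm) q.1 else q.2.1 ⟨j.1, ?_⟩, q.2.2)) fun ω => ?_
  · have := Fin.val_ne_of_ne h
    have := j.2
    omega
  · refine Prod.ext (funext fun ⟨j, hj⟩ => ?_) rfl
    by_cases h : j = i
    · subst h
      simp [prefixVar]
    · simp [prefixVar, h]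

theorem sum_mutualInfo_prefixVar_le (hP0 : ∀ ω, 0 ≤ P ω) [∀ i, Fintype (𝒳 i)] [Fintype β]
    (X : ∀ i, Ω → 𝒳 i) (hindep : ∀ x, law P (fun ω i => X i ω) x = ∏ i, law P (X i) (x i))
    (B : Ω → β) :
    ∑ i : Fin r, mutualInfo P (X i) (prefixVar X B i) ≤ entropy P B := by
  have htelescope : ∑ i : Fin r, (entropy P (prefixVar X B i) -
      entropy P (prefixVar X B (i + 1))) =
      entropy P (prefixVar X B 0) - entropy P (prefixVar X B r) := by
    rw [Fin.sum_univ_eq_sum_range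
      (fun k => entropy P (prefixVar X B k) - entropy P (prefixVar X B (k + 1)))]
    exact Finset.sum_range_sub' _ r
  have hfirst : entropy P (prefixVar X B 0) ≤ entropy P B :=
    entropy_le_of_comp_eq hP0 (fun c => (fun j => absurd j.2 (Nat.not_lt_zero _), c))
      fun ω => Prod.ext (funext fun j => absurd j.2 (Nat.not_lt_zero _)) rfl
  have hlast : ∑ i, entropy P (X i) ≤ entropy P (prefixVar X B r) := by
    rw [← entropy_pi_eq_sum hP0 X hindep]
    exact entropy_le_of_comp_eq hP0 (fun q i => q.1 ⟨i, i.2⟩) fun ω => rfl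
  calc ∑ i, mutualInfo P (X i) (prefixVar X B i)
      ≤ ∑ i : Fin r, (entropy P (X i) +
          (entropy P (prefixVar X B i) - entropy P (prefixVar X B (i + 1)))) :=
        Finset.sum_le_sum fun i _ => by
          have := entropy_prefixVar_succ_le hP0 X B i
          rw [mutualInfo]
          linarith
    _ ≤ entropy P B := by
        rw [Finset.sum_add_distrib, htelescope]
        linarith

end Prefix

end FiniteProb

theorem ConcaveOn.sum_le_card_mul_map_avg {ι : Type*} [Fintype ι] {s : Set ℝ} {f : ℝ → ℝ}
    (hf : ConcaveOn ℝ s f) {d : ι → ℝ} (hd : ∀ i, d i ∈ s) :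
    ∑ i, f (d i) ≤ Fintype.card ι * f ((∑ i, d i) / Fintype.card ι) := by
  cases isEmpty_or_nonempty ι
  · simp
  have hn : (0 : ℝ) < Fintype.card ι := Nat.cast_pos.mpr Fintype.card_pos
  have hjensen := hf.le_map_sum (t := Finset.univ) (w := fun _ => (Fintype.card ι : ℝ)⁻¹)
    (p := d) (fun _ _ => by positivity) (by simp [hn.ne']) fun i _ => hd i
  simp only [smul_eq_mul, ← Finset.mul_sum] at hjensen
  rw [div_eq_inv_mul]
  calc ∑ i, f (d i) = Fintype.card ι * ((Fintype.card ι : ℝ)⁻¹ * ∑ i, f (d i)) := by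
        field_simp
    _ ≤ _ := mul_le_mul_of_nonneg_left hjensen hn.le

open FiniteProb in
theorem direct_product_max
    {Ω : Type*} [Fintype Ω] (P : Ω → ℝ)
    (hP0 : ∀ ω, 0 ≤ P ω) (hP1 : ∑ ω, P ω = 1)
    {r b : ℕ}
    {𝒳 : Fin r → Type*} [∀ i, Fintype (𝒳 i)]
    (X : ∀ i, Ω → 𝒳 i)
    (hindep : ∀ x : ∀ i, 𝒳 i,
      prOf P (fun ω => ∀ i, X i ω = x i) = ∏ i, prOf P (fun ω => X i ω = x i))
    (B : Ω → Fin (2 ^ b))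
    (score : Fin r → Ω → ℝ)
    (f : ℝ → ℝ) (hconc : ConcaveOn ℝ (Set.Ici 0) f) (hmono : MonotoneOn f (Set.Ici 0))
    (hub : ∀ (i : Fin r) (w : ((j : {j : Fin r // j < i}) → 𝒳 j.1) × Fin (2 ^ b)),
      0 < prOf P (fun ω => ((fun j : {j : Fin r // j < i} => X j.1 ω), B ω) = w) →
      (∑ ω, (if ((fun j : {j : Fin r // j < i} => X j.1 ω), B ω) = w then P ω else 0) * score i ω) /
          prOf P (fun ω => ((fun j : {j : Fin r // j < i} => X j.1 ω), B ω) = w)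
        ≤ f (klBits
            (fun x : 𝒳 i =>
              prOf P (fun ω => X i ω = x ∧ ((fun j : {j : Fin r // j < i} => X j.1 ω), B ω) = w) /
                prOf P (fun ω => ((fun j : {j : Fin r // j < i} => X j.1 ω), B ω) = w))
            (fun x : 𝒳 i => prOf P (fun ω => X i ω = x)))) :
    ∑ ω, P ω * ∑ i, score i ω ≤ (r : ℝ) * f ((b : ℝ) / (r : ℝ)) := by
  set I : Fin r → ℝ := fun i => mutualInfo P (X i) (prefixVar X B i)
  have hlaw_indep : ∀ x, law P (fun ω i => X i ω) x = ∏ i, law P (X i) (x i) :=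
    fun x => (prOf_congr fun _ => funext_iff).trans (hindep x)
  have hinfo : ∑ i, I i ≤ b := by
    calc ∑ i, I i ≤ entropy P B := sum_mutualInfo_prefixVar_le hP0 X hlaw_indep B
      _ ≤ Real.logb 2 (Fintype.card (Fin (2 ^ b))) := entropy_le_logb_card hP0 hP1 B
      _ = b := by simp [Real.logb_pow]
  have hI : ∀ i, 0 ≤ I i := fun i => mutualInfo_nonneg hP0 hP1 _ _
  calc ∑ ω, P ω * ∑ i, score i ω = ∑ i, ∑ ω, P ω * score i ω := by
        simp only [Finset.mul_sum]
        exact Finset.sum_comm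
    _ ≤ ∑ i, f (I i) := Finset.sum_le_sum fun i _ =>
        sum_mul_le_map_mutualInfo hP0 hP1 hconc _ _ _ (hub i)
    _ ≤ r * f ((∑ i, I i) / r) := by simpa using hconc.sum_le_card_mul_map_avg fun i => Set.mem_Ici.mpr (hI i)
    _ ≤ r * f (b / r) := by
        gcongr
        exact hmono (Set.mem_Ici.mpr (div_nonneg (Finset.sum_nonneg fun i _ => hI i) r.cast_nonneg))
          (Set.mem_Ici.mpr (by positivity))
          (div_le_div_of_nonneg_right hinfo (Nat.cast_nonneg r))
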